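/- (Gallager's expurgated-code existence.) Let μ be a pairwise-independent ensemble with M' = 2M − 1 codewords (M ≥ 1, M' ≥ 2) and marginal Q, and let ρ ≥ 1. Then there exists a code c ∈ (𝒳^n)^{M'} such that at least M of the indices m ∈ {1, …, M'} satisfy P_{e,m}(c) ≤ 2^ρ · ( (M' − 1) · ∑_{x,x'∈𝒳^n} Q(x)Q(x')·Z(x,x')^{1/ρ} )^ρ. -/

import Mathlib

open scoped Classical

/-- `W` is a channel: nonnegative, and each row sums to one. -/
def IsChannel {𝒳 𝒴 : Type*} [Fintype 𝒴] (W : 𝒳 → 𝒴 → ℝ) : Prop :=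
  (∀ x y, 0 ≤ W x y) ∧ ∀ x, ∑ y, W x y = 1

/-- Maximum-likelihood error probability of message `m` under code `c`
(ties counted as errors). -/
noncomputable def Pem {𝒳 𝒴 : Type*} [Fintype 𝒴] {M : ℕ}
    (W : 𝒳 → 𝒴 → ℝ) (c : Fin M → 𝒳) (m : Fin M) : ℝ :=
  ∑ y, W (c m) y * (if ∃ k, k ≠ m ∧ W (c m) y ≤ W (c k) y then (1:ℝ) else 0)

/-- Bhattacharyya coefficient between inputs `x` and `x'`. -/
noncomputable def Bhat {𝒳 𝒴 : Type*} [Fintype 𝒴] (W : 𝒳 → 𝒴 → ℝ) (x x' : 𝒳) : ℝ :=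
  ∑ y, Real.sqrt (W x y * W x' y)

/-- `p` is a probability mass function on a finite type. -/
def IsPMF {α : Type*} [Fintype α] (p : α → ℝ) : Prop :=
  (∀ a, 0 ≤ p a) ∧ ∑ a, p a = 1

/-- Probability of the event `S` under the pmf `μ`. -/
noncomputable def pmfProb {α : Type*} [Fintype α] (μ : α → ℝ) (S : α → Prop) : ℝ :=
  ∑ a, if S a then μ a else 0

/-- Expectation of `f` under the pmf `μ`. -/
noncomputable def pmfExp {α : Type*} [Fintype α] (μ : α → ℝ) (f : α → ℝ) : ℝ :=
  ∑ a, μ a * f a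

/-- `μ` is a pairwise-independent ensemble of `M` codewords with marginal `Q`:
each codeword has law `Q` and each pair of distinct codewords has law `Q × Q`. -/
def PairwiseIndepEnsemble {𝒳 : Type*} [Fintype 𝒳] {M : ℕ}
    (μ : (Fin M → 𝒳) → ℝ) (Q : 𝒳 → ℝ) : Prop :=
  IsPMF μ ∧ IsPMF Q ∧
  (∀ (m : Fin M) (x : 𝒳), pmfProb μ (fun c => c m = x) = Q x) ∧
  (∀ (m k : Fin M), m ≠ k → ∀ (x x' : 𝒳),
    pmfProb μ (fun c => c m = x ∧ c k = x') = Q x * Q x')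

/-!
Union-bounding the maximum-likelihood error event and using `W (c m) y ≤ W (c k) y` on it gives
`P_{e,m}(c) ≤ ∑_{k ≠ m} Z(x_m, x_k)`. Raising to the power `1/ρ ≤ 1` is subadditive, so by
pairwise independence `E[P_{e,m}^{1/ρ}] ≤ B := (M' - 1) ∑ Q(x) Q(x') Z(x,x')^{1/ρ}` for every `m`.
Some code `c` has `∑_m P_{e,m}(c)^{1/ρ}` at most its mean `M' B`, and then at most `(M' - 1)/2 = M - 1`
messages of `c` can have `P_{e,m}(c)^{1/ρ} > 2B`.
-/

open Finset

lemma rpow_sum_le_sum_rpow {ι : Type*} (s : Finset ι) {f : ι → ℝ} (hf : ∀ i ∈ s, 0 ≤ f i)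
    {p : ℝ} (hp : 0 < p) (hp1 : p ≤ 1) :
    (∑ i ∈ s, f i) ^ p ≤ ∑ i ∈ s, f i ^ p := by
  induction s using Finset.cons_induction with
  | empty => simp [Real.zero_rpow hp.ne']
  | cons a s _ ih =>
    have hf' : ∀ i ∈ s, 0 ≤ f i := fun i hi => hf i (mem_cons_of_mem hi)
    rw [sum_cons, sum_cons]
    calc (f a + ∑ i ∈ s, f i) ^ p ≤ f a ^ p + (∑ i ∈ s, f i) ^ p :=
          Real.rpow_add_le_add_rpow (hf a (mem_cons_self a s)) (sum_nonneg hf') hp.le hp1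
      _ ≤ f a ^ p + ∑ i ∈ s, f i ^ p := by gcongr; exact ih hf'

-- The truncated `- 1` only matters for empty `ι`, where the left side is `0` as well.
lemma two_mul_card_filter_le_card_sub_one {ι : Type*} [Fintype ι] {f : ι → ℝ} {t : ℝ}
    (ht : 0 ≤ t) (hf : ∀ i, 0 ≤ f i) (hsum : ∑ i, f i ≤ Fintype.card ι * t) :
    2 * #{i | 2 * t < f i} ≤ Fintype.card ι - 1 := by
  set bad := ({i | 2 * t < f i} : Finset ι)
  rcases bad.eq_empty_or_nonempty with hbad | hbad
  · simp [hbad]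
  have hlt : ((2 * #bad : ℕ) : ℝ) * t < Fintype.card ι * t :=
    calc ((2 * #bad : ℕ) : ℝ) * t = ∑ i ∈ bad, 2 * t := by
          rw [sum_const, nsmul_eq_mul]; push_cast; ring
      _ < ∑ i ∈ bad, f i := sum_lt_sum_of_nonempty hbad fun i hi => (mem_filter.1 hi).2
      _ ≤ ∑ i, f i := sum_le_sum_of_subset_of_nonneg (subset_univ _) fun i _ _ => hf i
      _ ≤ _ := hsum
  have := lt_of_mul_lt_mul_right hlt ht
  norm_cast at this
  omega

section Pmf

variable {Ω : Type*} [Fintype Ω] (μ : Ω → ℝ)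

lemma pmfExp_comp {V : Type*} [Fintype V] (X : Ω → V) (g : V → ℝ) :
    pmfExp μ (fun a => g (X a)) = ∑ v, pmfProb μ (fun a => X a = v) * g v := by
  simp only [pmfExp, pmfProb, sum_mul, ite_mul, zero_mul]
  rw [sum_comm]
  simp

lemma pmfExp_sum {ι : Type*} (s : Finset ι) (f : ι → Ω → ℝ) :
    pmfExp μ (fun a => ∑ i ∈ s, f i a) = ∑ i ∈ s, pmfExp μ (f i) := by
  simp only [pmfExp, mul_sum]
  exact sum_comm

lemma pmfExp_mono {μ : Ω → ℝ} (hμ : ∀ a, 0 ≤ μ a) {f g : Ω → ℝ} (hfg : ∀ a, f a ≤ g a) :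
    pmfExp μ f ≤ pmfExp μ g :=
  sum_le_sum fun a _ => mul_le_mul_of_nonneg_left (hfg a) (hμ a)

lemma IsPMF.exists_le_pmfExp {μ : Ω → ℝ} (hμ : IsPMF μ) (f : Ω → ℝ) :
    ∃ a, f a ≤ pmfExp μ f := by
  obtain ⟨a, -, ha⟩ :=
    exists_min_image univ f (nonempty_of_sum_ne_zero (hμ.2 ▸ one_ne_zero))
  refine ⟨a, ?_⟩
  calc f a = pmfExp μ (fun _ => f a) := by rw [pmfExp, ← sum_mul, hμ.2, one_mul]
    _ ≤ pmfExp μ f := pmfExp_mono hμ.1 fun b => ha b (mem_univ b)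

end Pmf

lemma PairwiseIndepEnsemble.pmfExp_pair {𝒳 : Type*} [Fintype 𝒳] {M : ℕ}
    {μ : (Fin M → 𝒳) → ℝ} {Q : 𝒳 → ℝ} (hμ : PairwiseIndepEnsemble μ Q) {m k : Fin M}
    (hmk : m ≠ k) (g : 𝒳 → 𝒳 → ℝ) :
    pmfExp μ (fun c => g (c m) (c k)) = ∑ x, ∑ x', Q x * Q x' * g x x' := by
  rw [pmfExp_comp μ (fun c => (c m, c k)) (fun p => g p.1 p.2), Fintype.sum_prod_type]
  simp only [Prod.mk.injEq, hμ.2.2.2 m k hmk]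

section Channel

variable {𝒳 𝒴 : Type*} [Fintype 𝒴] {W : 𝒳 → 𝒴 → ℝ}

lemma Bhat_nonneg (W : 𝒳 → 𝒴 → ℝ) (x x' : 𝒳) : 0 ≤ Bhat W x x' :=
  sum_nonneg fun _ _ => Real.sqrt_nonneg _

lemma Pem_nonneg (hW : ∀ x y, 0 ≤ W x y) {M : ℕ} (c : Fin M → 𝒳) (m : Fin M) :
    0 ≤ Pem W c m :=
  sum_nonneg fun _ _ => mul_nonneg (hW _ _) (by split_ifs <;> norm_num)

lemma Pem_le_sum_Bhat (hW : ∀ x y, 0 ≤ W x y) {M : ℕ} (c : Fin M → 𝒳) (m : Fin M) :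
    Pem W c m ≤ ∑ k ∈ univ.erase m, Bhat W (c m) (c k) := by
  unfold Pem Bhat
  rw [sum_comm]
  refine sum_le_sum fun y _ => ?_
  split_ifs with herr
  · obtain ⟨k, hk, hle⟩ := herr
    calc W (c m) y * 1 = √(W (c m) y * W (c m) y) := by
          rw [mul_one, Real.sqrt_mul_self (hW _ _)]
      _ ≤ √(W (c m) y * W (c k) y) :=
          Real.sqrt_le_sqrt (mul_le_mul_of_nonneg_left hle (hW _ _))
      _ ≤ ∑ k ∈ univ.erase m, √(W (c m) y * W (c k) y) :=
          single_le_sum (f := fun k => √(W (c m) y * W (c k) y))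
            (fun _ _ => Real.sqrt_nonneg _) (mem_erase.2 ⟨hk, mem_univ k⟩)
  · rw [mul_zero]
    exact sum_nonneg fun _ _ => Real.sqrt_nonneg _

lemma pmfExp_Pem_rpow_le [Fintype 𝒳] (hW : ∀ x y, 0 ≤ W x y) {M : ℕ}
    {μ : (Fin M → 𝒳) → ℝ} {Q : 𝒳 → ℝ} (hμ : PairwiseIndepEnsemble μ Q)
    {s : ℝ} (hs : 0 < s) (hs1 : s ≤ 1) (m : Fin M) :
    pmfExp μ (fun c => Pem W c m ^ s)
      ≤ ((M : ℝ) - 1) * ∑ x, ∑ x', Q x * Q x' * Bhat W x x' ^ s := by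
  calc pmfExp μ (fun c => Pem W c m ^ s)
      ≤ pmfExp μ (fun c => ∑ k ∈ univ.erase m, Bhat W (c m) (c k) ^ s) :=
        pmfExp_mono hμ.1.1 fun c =>
          (Real.rpow_le_rpow (Pem_nonneg hW c m) (Pem_le_sum_Bhat hW c m) hs.le).trans
            (rpow_sum_le_sum_rpow _ (fun _ _ => Bhat_nonneg W _ _) hs hs1)
    _ = ∑ _k ∈ univ.erase m, ∑ x, ∑ x', Q x * Q x' * Bhat W x x' ^ s := by
        rw [pmfExp_sum]
        exact sum_congr rfl fun k hk => hμ.pmfExp_pair (ne_of_mem_erase hk).symm fun x x' => Bhat W x x' ^ s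
    _ = _ := by
        rw [sum_const, card_erase_of_mem (mem_univ m), card_univ, Fintype.card_fin,
          nsmul_eq_mul, Nat.cast_pred m.pos]

end Channel

theorem gallager_expurgated_code_exists_general
    {𝒳 𝒴 : Type*} [Fintype 𝒳] [Fintype 𝒴]
    (n : ℕ)
    (W : (Fin n → 𝒳) → (Fin n → 𝒴) → ℝ) (hW : IsChannel W)
    (Q : (Fin n → 𝒳) → ℝ) (M : ℕ)
    (M' : ℕ) (hM'eq : M' = 2 * M - 1) (hM' : 2 ≤ M')
    (μ : (Fin M' → (Fin n → 𝒳)) → ℝ) (hμ : PairwiseIndepEnsemble μ Q)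
    (ρ : ℝ) (hρ : 1 ≤ ρ) :
    ∃ c : Fin M' → (Fin n → 𝒳),
      M ≤ (Finset.univ.filter (fun m : Fin M' =>
        Pem W c m ≤
          (2:ℝ) ^ ρ *
            (((M' : ℝ) - 1) * ∑ x, ∑ x', Q x * Q x' * Bhat W x x' ^ (1/ρ)) ^ ρ)).card := by
  have hρ0 : 0 < ρ := one_pos.trans_le hρ
  set B := ((M' : ℝ) - 1) * ∑ x, ∑ x', Q x * Q x' * Bhat W x x' ^ (1/ρ)
  have hB : 0 ≤ B := by
    have hQ := hμ.2.1.1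
    have hM'1 : (1 : ℝ) ≤ M' := by exact_mod_cast one_le_two.trans hM'
    exact mul_nonneg (by linarith) (sum_nonneg fun x _ => sum_nonneg fun x' _ =>
      mul_nonneg (mul_nonneg (hQ x) (hQ x')) (Real.rpow_nonneg (Bhat_nonneg W x x') _))
  obtain ⟨c, hc⟩ := hμ.1.exists_le_pmfExp (fun c => ∑ m, Pem W c m ^ (1/ρ))
  have hsum : ∑ m, Pem W c m ^ (1/ρ) ≤ Fintype.card (Fin M') * B := by
    calc _ ≤ _ := hc
      _ = ∑ m, pmfExp μ (fun c => Pem W c m ^ (1/ρ)) := pmfExp_sum μ _ _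
      _ ≤ ∑ _m : Fin M', B := sum_le_sum fun m _ =>
          pmfExp_Pem_rpow_le hW.1 hμ (by positivity) ((div_le_one hρ0).2 hρ) m
      _ = _ := by simp
  have hbad := two_mul_card_filter_le_card_sub_one hB
    (fun m => Real.rpow_nonneg (Pem_nonneg hW.1 c m) _) hsum
  have hgood : ∀ m, Pem W c m ≤ 2 ^ ρ * B ^ ρ ↔ ¬ 2 * B < Pem W c m ^ (1/ρ) := fun m => by
    rw [not_lt, ← Real.mul_rpow zero_le_two hB, one_div,
      Real.rpow_inv_le_iff_of_pos (Pem_nonneg hW.1 c m) (by positivity) hρ0]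
  refine ⟨c, ?_⟩
  simp only [hgood]
  have hsplit := card_filter_add_card_filter_not (s := univ) (fun m => 2 * B < Pem W c m ^ (1/ρ))
  rw [card_univ] at hsplit
  simp only [Fintype.card_fin] at hbad hsplit
  omega

/-- Gallager's expurgated-code existence: for a pairwise-independent
ensemble with `M' = 2M - 1` codewords there exists a code in which at least `M`
codewords satisfy the expurgated bound with `γ = 2`. -/
theorem gallager_expurgated_code_exists
    {𝒳 𝒴 : Type*} [Fintype 𝒳] [Fintype 𝒴] [Nonempty 𝒳] [Nonempty 𝒴]
    (n : ℕ) (hn : 1 ≤ n)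
    (W : (Fin n → 𝒳) → (Fin n → 𝒴) → ℝ) (hW : IsChannel W)
    (Q : (Fin n → 𝒳) → ℝ) (M : ℕ) (hM : 1 ≤ M)
    (M' : ℕ) (hM'eq : M' = 2 * M - 1) (hM' : 2 ≤ M')
    (μ : (Fin M' → (Fin n → 𝒳)) → ℝ) (hμ : PairwiseIndepEnsemble μ Q)
    (ρ : ℝ) (hρ : 1 ≤ ρ) :
    ∃ c : Fin M' → (Fin n → 𝒳),
      M ≤ (Finset.univ.filter (fun m : Fin M' =>
        Pem W c m ≤
          (2:ℝ) ^ ρ *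
            (((M' : ℝ) - 1) * ∑ x, ∑ x', Q x * Q x' * Bhat W x x' ^ (1/ρ)) ^ ρ)).card :=
  gallager_expurgated_code_exists_general n W hW Q M M' hM'eq hM' μ hμ ρ hρ
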